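/- arXiv:2110.07158 — 4 statements merged into one kernel-verified Lean document; each statement's English description precedes it below -/
import Mathlib

section
/- The number of assignments of vectors v_1,...,v_m ∈ F_2^4 to m distinct positions such that v_i · v_j = 0 (mod 2) for all i ≠ j equals 3·4^m + Θ(m^2)·2^m + Θ(m^4); in particular it is at least 3·4^m - 2·2^m and at most 3·4^m + 27·m^3·2^m for sufficiently large m. -/
open Finset

abbrev F2 := Fin 4 → ZMod 2

def ip (u v : F2) : ZMod 2 := ∑ k, u k * v k

def zv : F2 := ![0,0,0,0]

def P1 : Finset F2 := {![0,0,0,0], ![1,1,1,1], ![0,0,1,1], ![1,1,0,0]}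
def P2 : Finset F2 := {![0,0,0,0], ![1,1,1,1], ![0,1,0,1], ![1,0,1,0]}
def P3 : Finset F2 := {![0,0,0,0], ![1,1,1,1], ![0,1,1,0], ![1,0,0,1]}

lemma zv_eq : zv = 0 := by decide

lemma ip_comm (x y : F2) : ip x y = ip y x := by
  simp [ip, mul_comm]

lemma ip_add_left (x y w : F2) : ip (x + y) w = ip x w + ip y w := by
  simp [ip, add_mul, Finset.sum_add_distrib]

lemma ip_add_right (x y w : F2) : ip w (x + y) = ip w x + ip w y := by
  rw [ip_comm, ip_add_left, ip_comm x w, ip_comm y w]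

lemma f2_add_self (x : F2) : x + x = 0 := by
  funext k
  exact (by decide : ∀ a : ZMod 2, a + a = 0) _

lemma f2_add_cancel {x y w : F2} (h : x + y = x + w) : y = w := by
  have := congrArg (x + ·) h
  simpa [← add_assoc, f2_add_self] using this

set_option maxRecDepth 4000 in
lemma keyK1 : ∀ a : F2, ip a a = 0 →
    a ∈ P1 ∨ a ∈ P2 ∨ a ∈ P3 := by decide

set_option maxRecDepth 4000 in
lemma keyK2 : ∀ a b : F2, ip a a = 0 → ip b b = 0 → ip a b = 0 →
    a = ![0,0,0,0] ∨ a = ![1,1,1,1] ∨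
    ((a ∈ P1 → b ∈ P1) ∧ (a ∈ P2 → b ∈ P2) ∧ (a ∈ P3 → b ∈ P3)) := by decide

set_option maxRecDepth 4000 in
lemma keyU : ∀ x y w : F2, (ip x x = 0 ∧ ip y y = 0 ∧ ip w w = 1 ∧
    ip x w = 0 ∧ ip y w = 0 ∧ ip x y = 0) →
    x = zv ∨ y = zv ∨ x = y := by decide

/-- no even nonzero vector orthogonal to three distinct pairwise orthogonal odd vectors -/
lemma key3 {x w1 w2 w3 : F2} (hx : ip x x = 0) (h1 : ip w1 w1 = 1) (h2 : ip w2 w2 = 1)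
    (h3 : ip w3 w3 = 1) (hx1 : ip x w1 = 0) (hx2 : ip x w2 = 0) (hx3 : ip x w3 = 0)
    (h12 : ip w1 w2 = 0) (h13 : ip w1 w3 = 0) (h23 : ip w2 w3 = 0)
    (hxz : x ≠ 0) (hne12 : w1 ≠ w2) (hne13 : w1 ≠ w3) (hne23 : w2 ≠ w3) : False := by
  have hzv : zv = 0 := zv_eq
  have key : ∀ a b c : F2, a ≠ b → ip a a = 1 → ip b b = 1 → ip c c = 1 →
      ip a b = 0 → ip x a = 0 → ip x b = 0 → ip x c = 0 → ip a c = 0 → ip b c = 0 →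
      x = a + b := by
    intro a b c hab ha hb hc habp hxa hxb hxc hac hbc
    have hiso : ip (a + b) (a + b) = 0 := by
      rw [ip_add_left, ip_add_right, ip_add_right, ha, hb, habp, ip_comm b a, habp]
      decide
    have horth : ip (a + b) c = 0 := by
      rw [ip_add_left, hac, hbc]; decide
    have hxab : ip x (a + b) = 0 := by
      rw [ip_add_right, hxa, hxb]; decide
    have habz : a + b ≠ 0 := by
      intro h
      apply hab
      have h2 : a + (a + b) = a + 0 := by rw [h]
      rw [← add_assoc, f2_add_self, zero_add, add_zero] at h2
      exact h2.symm
    rcases keyU x (a + b) c ⟨hx, hiso, hc, hxc, horth, hxab⟩ with h | h | h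
    · exact absurd (h.trans zv_eq) hxz
    · exact absurd (h.trans zv_eq) habz
    · exact h
  have e1 : x = w1 + w2 := key w1 w2 w3 hne12 h1 h2 h3 h12 hx1 hx2 hx3 h13 h23
  have e2 : x = w1 + w3 := key w1 w3 w2 hne13 h1 h3 h2 h13 hx1 hx3 hx2 h12 (ip_comm w2 w3 ▸ h23)
  exact hne23 (f2_add_cancel (e1.symm.trans e2))

abbrev Valid (m : ℕ) (v : Fin m → F2) : Prop := ∀ i j : Fin m, i ≠ j → ip (v i) (v j) = 0

def A (m : ℕ) (P : Finset F2) : Finset (Fin m → F2) := Fintype.piFinset fun _ => P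

lemma card_A (m : ℕ) (P : Finset F2) : (A m P).card = P.card ^ m := by
  simp [A, Fintype.card_piFinset]

lemma A_inter (m : ℕ) (P Q : Finset F2) : A m P ∩ A m Q = A m (P ∩ Q) := by
  ext f
  simp [A, Fintype.mem_piFinset, forall_and]

lemma P1orth : ∀ a ∈ P1, ∀ b ∈ P1, ip a b = 0 := by decide
lemma P2orth : ∀ a ∈ P2, ∀ b ∈ P2, ip a b = 0 := by decide
lemma P3orth : ∀ a ∈ P3, ∀ b ∈ P3, ip a b = 0 := by decide
lemma P12 : P1 ∩ P2 = {![0,0,0,0], ![1,1,1,1]} := by decide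
lemma P13 : P1 ∩ P3 = {![0,0,0,0], ![1,1,1,1]} := by decide
lemma P23 : P2 ∩ P3 = {![0,0,0,0], ![1,1,1,1]} := by decide
lemma cardP1 : P1.card = 4 := by decide
lemma cardP2 : P2.card = 4 := by decide
lemma cardP3 : P3.card = 4 := by decide
lemma cardZE : ({![0,0,0,0], ![1,1,1,1]} : Finset F2).card = 2 := by decide

lemma lower_bound (m : ℕ) :
    3 * 4 ^ m - 2 * 2 ^ m ≤ (univ.filter (Valid m)).card := by
  have hsub : A m P1 ∪ A m P2 ∪ A m P3 ⊆ univ.filter (Valid m) := by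
    intro v hv
    simp only [mem_union, A, Fintype.mem_piFinset] at hv
    simp only [mem_filter, mem_univ, true_and]
    intro i j _
    rcases hv with (h | h) | h
    · exact P1orth _ (h i) _ (h j)
    · exact P2orth _ (h i) _ (h j)
    · exact P3orth _ (h i) _ (h j)
  have c1 : (A m P1).card = 4 ^ m := by rw [card_A, cardP1]
  have c2 : (A m P2).card = 4 ^ m := by rw [card_A, cardP2]
  have c3 : (A m P3).card = 4 ^ m := by rw [card_A, cardP3]
  have c12 : (A m P1 ∩ A m P2).card = 2 ^ m := by
    rw [A_inter, P12, card_A, cardZE]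
  have c123 : ((A m P1 ∪ A m P2) ∩ A m P3).card = 2 ^ m := by
    rw [union_inter_distrib_right, A_inter, A_inter, P13, P23, union_self, card_A, cardZE]
  have h12 := Finset.card_union_add_card_inter (A m P1) (A m P2)
  have h123 := Finset.card_union_add_card_inter (A m P1 ∪ A m P2) (A m P3)
  have hle := Finset.card_le_card hsub
  omega

lemma even_subset (m : ℕ) :
    (univ.filter fun v => Valid m v ∧ ∀ i, ip (v i) (v i) = 0) ⊆
      A m P1 ∪ A m P2 ∪ A m P3 := by
  intro v hv
  simp only [mem_filter, mem_univ, true_and] at hv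
  obtain ⟨hval, heven⟩ := hv
  simp only [mem_union, A, Fintype.mem_piFinset]
  by_cases hz : ∀ j, v j = ![0,0,0,0] ∨ v j = ![1,1,1,1]
  · left; left
    intro j
    rcases hz j with h | h <;> rw [h] <;> decide
  · push_neg at hz
    obtain ⟨i, hi0, hie⟩ := hz
    have hK : ∀ j, (v i ∈ P1 → v j ∈ P1) ∧ (v i ∈ P2 → v j ∈ P2) ∧ (v i ∈ P3 → v j ∈ P3) := by
      intro j
      by_cases hij : j = i
      · subst hij; exact ⟨id, id, id⟩
      · rcases keyK2 (v i) (v j) (heven i) (heven j) (hval i j fun h => hij h.symm) with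
          h | h | h
        · exact absurd h hi0
        · exact absurd h hie
        · exact h
    rcases keyK1 (v i) (heven i) with h | h | h
    · exact Or.inl (Or.inl fun j => (hK j).1 h)
    · exact Or.inl (Or.inr fun j => (hK j).2.1 h)
    · exact Or.inr fun j => (hK j).2.2 h

noncomputable def enc1 {m : ℕ} (v : Fin m → F2) : F2 → Option (Fin m) :=
  fun u => if h : u ≠ 0 ∧ ∃ i, v i = u then some h.2.choose else none

lemma enc1_inv {m : ℕ} {v : Fin m → F2} {u : F2} {j : Fin m}
    (h : enc1 v u = some j) : v j = u := by
  rw [enc1] at h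
  split at h
  · rename_i hc
    have h2 := Option.some.inj h
    rw [← h2]
    exact hc.2.choose_spec
  · exact absurd h (by simp)

lemma enc1_spec {m : ℕ} {v : Fin m → F2} (hval : Valid m v)
    (hQ : ∀ j, ip (v j) (v j) = 0 → v j = 0) {i : Fin m} (hi : v i ≠ 0) :
    enc1 v (v i) = some i := by
  have h : v i ≠ (0 : F2) ∧ ∃ j, v j = v i := ⟨hi, i, rfl⟩
  rw [enc1, dif_pos h]
  congr 1
  by_contra hne
  have hspec : v h.2.choose = v i := h.2.choose_spec
  have h0 : ip (v h.2.choose) (v i) = 0 := hval _ _ hne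
  rw [hspec] at h0
  exact hi (hQ i h0)

lemma S1_card (m : ℕ) :
    (univ.filter fun v => Valid m v ∧ ∀ j, ip (v j) (v j) = 0 → v j = 0).card ≤
      (m + 1) ^ 16 := by
  classical
  have hinj : ∀ v ∈ (univ.filter fun v => Valid m v ∧ ∀ j, ip (v j) (v j) = 0 → v j = 0),
      ∀ w ∈ (univ.filter fun v => Valid m v ∧ ∀ j, ip (v j) (v j) = 0 → v j = 0),
      enc1 v = enc1 w → v = w := by
    intro v hv w hw heq
    simp only [mem_filter, mem_univ, true_and] at hv hw
    funext j
    by_cases h0 : v j = 0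
    · by_cases h0' : w j = 0
      · rw [h0, h0']
      · have h1 := enc1_spec hw.1 hw.2 h0'
        rw [← heq] at h1
        have := enc1_inv h1
        rw [this] at h0
        exact absurd h0 h0'
    · have h1 := enc1_spec hv.1 hv.2 h0
      rw [heq] at h1
      exact (enc1_inv h1).symm
  have hle := Finset.card_le_card_of_injOn enc1 (fun a _ => mem_univ (enc1 a)) hinj
  calc (univ.filter fun v => Valid m v ∧ ∀ j, ip (v j) (v j) = 0 → v j = 0).card
      ≤ (univ : Finset (F2 → Option (Fin m))).card := hle
    _ = (m + 1) ^ 16 := by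
        rw [card_univ]
        simp [Fintype.card_fun]

def Ofin {m : ℕ} (v : Fin m → F2) : Finset (Fin m) :=
  univ.filter fun i => ip (v i) (v i) = 1

def recon {m : ℕ} (d : Fin m × Fin m × F2 × F2 × F2 × (Fin m → Bool)) : Fin m → F2 :=
  fun j => if j = d.1 then d.2.2.1 else if j = d.2.1 then d.2.2.2.1 else
    if d.2.2.2.2.2 j then d.2.2.2.2.1 else 0

noncomputable def enc2 {m : ℕ} (i0 : Fin m) (v : Fin m → F2) :
    Fin m × Fin m × F2 × F2 × F2 × (Fin m → Bool) :=
  if h : (Ofin v).Nonempty ∧ ∃ x : F2, ip x x = 0 ∧ x ≠ 0 ∧ ∃ j, v j = x then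
    ((Ofin v).min' h.1, (Ofin v).max' h.1, v ((Ofin v).min' h.1), v ((Ofin v).max' h.1),
      h.2.choose, fun j => decide (v j = h.2.choose))
  else (i0, i0, 0, 0, 0, fun _ => false)

lemma zmod2_cases : ∀ c : ZMod 2, c = 0 ∨ c = 1 := by decide

lemma recon_enc2 {m : ℕ} (i0 : Fin m) {v : Fin m → F2} (hval : Valid m v)
    (h1 : ∃ i, ip (v i) (v i) = 1)
    (h2 : ∃ x : F2, ip x x = 0 ∧ x ≠ 0 ∧ ∃ j, v j = x) :
    recon (enc2 i0 v) = v := by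
  have hne : (Ofin v).Nonempty := by
    obtain ⟨i, hi⟩ := h1
    exact ⟨i, by simp [Ofin, hi]⟩
  have hcond : (Ofin v).Nonempty ∧ ∃ x : F2, ip x x = 0 ∧ x ≠ 0 ∧ ∃ j, v j = x := ⟨hne, h2⟩
  rw [enc2, dif_pos hcond]
  set i1 := (Ofin v).min' hcond.1 with hi1def
  set i2 := (Ofin v).max' hcond.1 with hi2def
  set x := hcond.2.choose with hxdef
  have hxspec : ip x x = 0 ∧ x ≠ 0 ∧ ∃ j, v j = x := hcond.2.choose_spec
  have hi1mem : i1 ∈ Ofin v := Finset.min'_mem _ _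
  have hi2mem : i2 ∈ Ofin v := Finset.max'_mem _ _
  have hodd : ∀ k, k ∈ Ofin v ↔ ip (v k) (v k) = 1 := by
    intro k; simp [Ofin]
  funext j
  simp only [recon]
  by_cases hj1 : j = i1
  · simp [hj1]
  · by_cases hj2 : j = i2
    · rw [if_neg hj1, if_pos hj2, hj2]
    · simp only [if_neg hj1, if_neg hj2]
      -- j is not an odd position
      have hjO : j ∉ Ofin v := by
        intro hj
        by_cases h12 : i1 = i2
        · apply hj1
          have hl := Finset.min'_le (Ofin v) j hj
          have hr := Finset.le_max' (Ofin v) j hj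
          rw [← hi1def] at hl
          rw [← hi2def, ← h12] at hr
          exact le_antisymm hr hl
        · -- three distinct odd positions i1, i2, j
          obtain ⟨j0, hj0⟩ := hxspec.2.2
          have hj0O : j0 ∉ Ofin v := by
            rw [hodd j0, hj0, hxspec.1]
            decide
          have hj0i1 : j0 ≠ i1 := fun h => hj0O (h ▸ hi1mem)
          have hj0i2 : j0 ≠ i2 := fun h => hj0O (h ▸ hi2mem)
          have hj0j : j0 ≠ j := fun h => hj0O (h ▸ hj)
          have o1 : ip (v i1) (v i1) = 1 := (hodd i1).1 hi1mem
          have o2 : ip (v i2) (v i2) = 1 := (hodd i2).1 hi2mem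
          have o3 : ip (v j) (v j) = 1 := (hodd j).1 hj
          have d12 : v i1 ≠ v i2 := by
            intro h
            have := hval i1 i2 h12
            rw [h] at this
            rw [this] at o2
            exact absurd o2 (by decide)
          have d13 : v i1 ≠ v j := by
            intro h
            have := hval i1 j fun hh => hj1 hh.symm
            rw [h] at this
            rw [this] at o3
            exact absurd o3 (by decide)
          have d23 : v i2 ≠ v j := by
            intro h
            have := hval i2 j fun hh => hj2 hh.symm
            rw [h] at this
            rw [this] at o3
            exact absurd o3 (by decide)
          exact key3 (hj0 ▸ hxspec.1) o1 o2 o3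
            (hj0 ▸ hval j0 i1 hj0i1) (hj0 ▸ hval j0 i2 hj0i2) (hj0 ▸ hval j0 j hj0j)
            (hval i1 i2 h12) (hval i1 j fun hh => hj1 hh.symm)
            (hval i2 j fun hh => hj2 hh.symm)
            (hj0 ▸ hxspec.2.1) d12 d13 d23
      have heva : ip (v j) (v j) = 0 := by
        rcases zmod2_cases (ip (v j) (v j)) with h | h
        · exact h
        · exact absurd ((hodd j).2 h) hjO
      by_cases hvx : v j = x
      · simp [hvx]
      · have hvz : v j = 0 := by
          by_contra hnz
          obtain ⟨j0, hj0⟩ := hxspec.2.2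
          have hj0O : j0 ∉ Ofin v := by
            rw [hodd j0, hj0, hxspec.1]
            decide
          have hj0i1 : j0 ≠ i1 := fun h => hj0O (h ▸ hi1mem)
          have hji1 : j ≠ i1 := hj1
          have o1 : ip (v i1) (v i1) = 1 := (hodd i1).1 hi1mem
          have hipjx : ip (v j) x = 0 := by
            by_cases hjj0 : j = j0
            · rw [hjj0, hj0] at hvx
              exact absurd rfl hvx
            · exact hj0 ▸ hval j j0 hjj0
          rcases keyU (v j) x (v i1) ⟨heva, hxspec.1, o1,
              hval j i1 hji1, hj0 ▸ hval j0 i1 hj0i1, hipjx⟩ with h | h | h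
          · exact hnz (h.trans zv_eq)
          · exact hxspec.2.1 (h.trans zv_eq)
          · exact hvx h
        have hx0 : ¬(0 : F2) = x := fun h => hxspec.2.1 h.symm
        simp [hvz, hx0]
      
lemma S2_card (m : ℕ) (hm : 0 < m) :
    (univ.filter fun v => Valid m v ∧ (∃ i, ip (v i) (v i) = 1) ∧
      ∃ j, ip (v j) (v j) = 0 ∧ v j ≠ 0).card ≤ 4096 * (m ^ 2 * 2 ^ m) := by
  classical
  have i0 : Fin m := ⟨0, hm⟩
  have hinj : ∀ v ∈ (univ.filter fun v => Valid m v ∧ (∃ i, ip (v i) (v i) = 1) ∧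
      ∃ j, ip (v j) (v j) = 0 ∧ v j ≠ 0),
      ∀ w ∈ (univ.filter fun v => Valid m v ∧ (∃ i, ip (v i) (v i) = 1) ∧
      ∃ j, ip (v j) (v j) = 0 ∧ v j ≠ 0),
      enc2 i0 v = enc2 i0 w → v = w := by
    intro v hv w hw heq
    simp only [mem_filter, mem_univ, true_and] at hv hw
    obtain ⟨hv1, hv2, jv, hjv⟩ := hv
    obtain ⟨hw1, hw2, jw, hjw⟩ := hw
    calc v = recon (enc2 i0 v) := (recon_enc2 i0 hv1 hv2 ⟨v jv, hjv.1, hjv.2, jv, rfl⟩).symm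
      _ = recon (enc2 i0 w) := by rw [heq]
      _ = w := recon_enc2 i0 hw1 hw2 ⟨w jw, hjw.1, hjw.2, jw, rfl⟩
  have hle := Finset.card_le_card_of_injOn (enc2 i0) (fun a _ => mem_univ (enc2 i0 a)) hinj
  calc (univ.filter fun v => Valid m v ∧ (∃ i, ip (v i) (v i) = 1) ∧
      ∃ j, ip (v j) (v j) = 0 ∧ v j ≠ 0).card
      ≤ (univ : Finset (Fin m × Fin m × F2 × F2 × F2 × (Fin m → Bool))).card := hle
    _ = 4096 * (m ^ 2 * 2 ^ m) := by
        rw [card_univ]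
        simp [Fintype.card_fun]
        ring

set_option maxHeartbeats 1600000 in
lemma pow16_le : ∀ m : ℕ, 256 ≤ m → (m + 1) ^ 16 ≤ 2 ^ m := by
  intro m hm
  induction m, hm using Nat.le_induction with
  | base =>
    calc (256 + 1) ^ 16 ≤ (2 ^ 9) ^ 16 := Nat.pow_le_pow_left (by norm_num) _
      _ = 2 ^ 144 := by rw [← pow_mul]
      _ ≤ 2 ^ 256 := Nat.pow_le_pow_right (by norm_num) (by norm_num)
  | succ n hn ih =>
    have key : 257 * (n + 1 + 1) ≤ 258 * (n + 1) := by omega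
    have h1 : (257 * (n + 1 + 1)) ^ 16 ≤ (258 * (n + 1)) ^ 16 :=
      Nat.pow_le_pow_left key _
    rw [mul_pow, mul_pow] at h1
    have h258 : (258 : ℕ) ^ 16 ≤ 2 * 257 ^ 16 := by norm_num
    have h2 : 257 ^ 16 * (n + 1 + 1) ^ 16 ≤ 257 ^ 16 * (2 * 2 ^ n) := by
      calc 257 ^ 16 * (n + 1 + 1) ^ 16 ≤ 258 ^ 16 * (n + 1) ^ 16 := h1
        _ ≤ (2 * 257 ^ 16) * 2 ^ n := Nat.mul_le_mul h258 ih
        _ = 257 ^ 16 * (2 * 2 ^ n) := by ring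
    have := Nat.le_of_mul_le_mul_left h2 (by positivity)
    calc (n + 1 + 1) ^ 16 ≤ 2 * 2 ^ n := this
      _ = 2 ^ (n + 1) := by rw [pow_succ, mul_comm]

lemma upper_bound (m : ℕ) (hm : 256 ≤ m) :
    (univ.filter (Valid m)).card ≤ 3 * 4 ^ m + 27 * m ^ 3 * 2 ^ m := by
  have hcover : univ.filter (Valid m) ⊆
      ((univ.filter fun v => Valid m v ∧ ∀ i, ip (v i) (v i) = 0) ∪
        (univ.filter fun v => Valid m v ∧ ∀ j, ip (v j) (v j) = 0 → v j = 0)) ∪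
      (univ.filter fun v => Valid m v ∧ (∃ i, ip (v i) (v i) = 1) ∧
        ∃ j, ip (v j) (v j) = 0 ∧ v j ≠ 0) := by
    intro v hv
    simp only [mem_filter, mem_univ, true_and, mem_union] at *
    by_cases hA : ∀ i, ip (v i) (v i) = 0
    · exact Or.inl (Or.inl ⟨hv, hA⟩)
    · by_cases hB : ∀ j, ip (v j) (v j) = 0 → v j = 0
      · exact Or.inl (Or.inr ⟨hv, hB⟩)
      · push_neg at hA hB
        obtain ⟨i, hi⟩ := hA
        obtain ⟨j, hj⟩ := hB
        exact Or.inr ⟨hv, ⟨i, (zmod2_cases _).resolve_left hi⟩, j, hj⟩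
  have h1 : (univ.filter fun v : Fin m → F2 => Valid m v ∧ ∀ i, ip (v i) (v i) = 0).card
      ≤ 3 * 4 ^ m := by
    calc (univ.filter fun v : Fin m → F2 => Valid m v ∧ ∀ i, ip (v i) (v i) = 0).card
        ≤ (A m P1 ∪ A m P2 ∪ A m P3).card := Finset.card_le_card (even_subset m)
      _ ≤ (A m P1 ∪ A m P2).card + (A m P3).card := Finset.card_union_le _ _
      _ ≤ (A m P1).card + (A m P2).card + (A m P3).card :=
          Nat.add_le_add_right (Finset.card_union_le _ _) _
      _ = 3 * 4 ^ m := by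
          rw [card_A, card_A, card_A, cardP1, cardP2, cardP3]; ring
  have h2 := S1_card m
  have h3 := S2_card m (lt_of_lt_of_le (by norm_num) hm)
  have hp16 : (m + 1) ^ 16 ≤ 2 ^ m := pow16_le m hm
  have hq : 1 + 4096 * m ^ 2 ≤ 27 * m ^ 3 := by nlinarith
  calc (univ.filter (Valid m)).card
      ≤ (((univ.filter fun v : Fin m → F2 => Valid m v ∧ ∀ i, ip (v i) (v i) = 0) ∪
          (univ.filter fun v : Fin m → F2 => Valid m v ∧ ∀ j, ip (v j) (v j) = 0 → v j = 0)) ∪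
          (univ.filter fun v : Fin m → F2 => Valid m v ∧ (∃ i, ip (v i) (v i) = 1) ∧
            ∃ j, ip (v j) (v j) = 0 ∧ v j ≠ 0)).card := Finset.card_le_card hcover
    _ ≤ ((univ.filter fun v : Fin m → F2 => Valid m v ∧ ∀ i, ip (v i) (v i) = 0) ∪
          (univ.filter fun v : Fin m → F2 => Valid m v ∧ ∀ j, ip (v j) (v j) = 0 → v j = 0)).card +
          (univ.filter fun v : Fin m → F2 => Valid m v ∧ (∃ i, ip (v i) (v i) = 1) ∧
            ∃ j, ip (v j) (v j) = 0 ∧ v j ≠ 0).card := Finset.card_union_le _ _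
    _ ≤ (univ.filter fun v : Fin m → F2 => Valid m v ∧ ∀ i, ip (v i) (v i) = 0).card +
          (univ.filter fun v : Fin m → F2 => Valid m v ∧ ∀ j, ip (v j) (v j) = 0 → v j = 0).card +
          (univ.filter fun v : Fin m → F2 => Valid m v ∧ (∃ i, ip (v i) (v i) = 1) ∧
            ∃ j, ip (v j) (v j) = 0 ∧ v j ≠ 0).card :=
        Nat.add_le_add_right (Finset.card_union_le _ _) _
    _ ≤ 3 * 4 ^ m + (m + 1) ^ 16 + 4096 * (m ^ 2 * 2 ^ m) :=
        Nat.add_le_add (Nat.add_le_add h1 h2) h3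
    _ ≤ 3 * 4 ^ m + 2 ^ m + 4096 * (m ^ 2 * 2 ^ m) :=
        Nat.add_le_add_right (Nat.add_le_add_left hp16 _) _
    _ = 3 * 4 ^ m + (1 + 4096 * m ^ 2) * 2 ^ m := by ring
    _ ≤ 3 * 4 ^ m + 27 * m ^ 3 * 2 ^ m :=
        Nat.add_le_add_left (Nat.mul_le_mul_right _ hq) _

/-- The number of assignments of vectors `v₁,…,v_m ∈ F₂⁴` to `m` distinct positions
such that `vᵢ · vⱼ = 0 (mod 2)` for all `i ≠ j` equals `3·4^m + Θ(m²)·2^m + Θ(m⁴)`;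
in particular it is at least `3·4^m - 2·2^m` and at most `3·4^m + 27·m³·2^m`
for sufficiently large `m`. -/
theorem stmt_0 :
    ∃ M : ℕ, ∀ m : ℕ, M ≤ m →
      3 * 4 ^ m - 2 * 2 ^ m ≤
        Nat.card {v : Fin m → (Fin 4 → ZMod 2) //
          ∀ i j : Fin m, i ≠ j → ∑ k, v i k * v j k = 0} ∧
      Nat.card {v : Fin m → (Fin 4 → ZMod 2) //
          ∀ i j : Fin m, i ≠ j → ∑ k, v i k * v j k = 0}
        ≤ 3 * 4 ^ m + 27 * m ^ 3 * 2 ^ m := by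
  refine ⟨256, fun m hm => ?_⟩
  have hconv : Nat.card {v : Fin m → (Fin 4 → ZMod 2) //
      ∀ i j : Fin m, i ≠ j → ∑ k, v i k * v j k = 0} = (univ.filter (Valid m)).card := by
    rw [Nat.card_eq_fintype_card, Fintype.card_subtype]
    congr 1
  rw [hconv]
  exact ⟨lower_bound m, upper_bound m hm⟩
end

section
/- The average purity of a subsystem A of N_A qubits for the random graph state CZ ensemble equals (d_A + d_B - 1)/d, where d_A = 2^{N_A}, d_B = 2^{N - N_A}, d = 2^N. In the combinatorial formulation: the number of strings in (F_2^2)^N that survive all pairwise parity constraints between A and its complement, times d^{-2}, equals (d_A + d_B - 1)/d. -/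
/-!
Over `F₂`, "not both `b i = 1` and `b j = 1`" means `b i = 0 ∨ b j = 0`, so a string survives
all constraints between `A` and its complement exactly when it vanishes on `A` or on the
complement. These two sets have `2^{N_A}` and `2^{N - N_A}` elements and meet only in the zero
string, giving `2^{N_A} + 2^{N - N_A} - 1` survivors.
-/

open Finset

section VanishingFunctions

variable {ι M : Type*} [Fintype ι] [DecidableEq ι] [Fintype M] [DecidableEq M] [Zero M]

lemma card_filter_forall_notMem_eq_zero (s : Finset ι) :
    #{b : ι → M | ∀ i ∉ s, b i = 0} = Fintype.card M ^ #s := by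
  have : ({b : ι → M | ∀ i ∉ s, b i = 0} : Finset _) =
      Fintype.piFinset fun i => if i ∈ s then univ else {0} := by
    ext b
    simp only [mem_filter, mem_univ, true_and, Fintype.mem_piFinset]
    refine forall_congr' fun i => ?_
    split_ifs with hi <;> simp [hi]
  rw [this, Fintype.card_piFinset]
  simp only [apply_ite card, card_univ, card_singleton, prod_ite_mem, univ_inter, prod_const]

lemma natCard_vanishing_off_or_on_add_one (s : Finset ι) :
    Nat.card {b : ι → M // (∀ i ∉ s, b i = 0) ∨ ∀ i ∈ s, b i = 0} + 1 =
      Fintype.card M ^ #s + Fintype.card M ^ #sᶜ := by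
  have hinter : univ.filter (fun b : ι → M => ∀ i ∉ s, b i = 0) ∩
      univ.filter (fun b => ∀ i ∈ s, b i = 0) = {0} := by
    ext b
    simp only [mem_inter, mem_filter, mem_univ, true_and, mem_singleton, funext_iff,
      Pi.zero_apply]
    exact ⟨fun ⟨hoff, hon⟩ i => if hi : i ∈ s then hon i hi else hoff i hi,
      fun h => ⟨fun i _ => h i, fun i _ => h i⟩⟩
  have hon := card_filter_forall_notMem_eq_zero (M := M) sᶜ
  simp only [mem_compl, not_not] at hon
  rw [Nat.card_eq_fintype_card, Fintype.card_subtype, filter_or, ← card_singleton (0 : ι → M),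
    ← hinter, card_union_add_card_inter, card_filter_forall_notMem_eq_zero, hon]

end VanishingFunctions

lemma ZMod.two_not_eq_one_and_eq_one_iff (x y : ZMod 2) : ¬(x = 1 ∧ y = 1) ↔ x = 0 ∨ y = 0 := by
  revert x y; decide

lemma forall_not_both_one_across_iff {ι : Type*} (A : Finset ι) (b : ι → ZMod 2) :
    (∀ i ∈ A, ∀ j ∉ A, ¬(b i = 1 ∧ b j = 1)) ↔ (∀ j ∉ A, b j = 0) ∨ ∀ i ∈ A, b i = 0 := by
  simp only [ZMod.two_not_eq_one_and_eq_one_iff]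
  refine ⟨fun h => ?_, ?_⟩
  · by_cases hA : ∀ i ∈ A, b i = 0
    · exact Or.inr hA
    · obtain ⟨i, hi, hbi⟩ := not_forall₂.mp hA
      exact Or.inl fun j hj => (h i hi j hj).resolve_left hbi
  · rintro (hoff | hon) i hi j hj
    exacts [Or.inr (hoff j hj), Or.inl (hon i hi)]

/-- Average purity of a subsystem `A` of `N_A` qubits for the random CZ graph-state
ensemble: the number of strings in `(F₂)^N` surviving all pairwise parity constraints
between `A` and its complement, times the `2^N` encoding redundancy and the
normalization `d^{-2}`, equals `(d_A + d_B - 1)/d`. -/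
theorem stmt_5 (N NA : ℕ) (A : Finset (Fin N)) (hA : A.card = NA) :
    ((Nat.card {b : Fin N → ZMod 2 //
        ∀ i ∈ A, ∀ j ∉ A, ¬(b i = 1 ∧ b j = 1)} * 2 ^ N : ℕ) : ℚ) / ((2 : ℚ) ^ N) ^ 2
      = ((2 : ℚ) ^ NA + 2 ^ (N - NA) - 1) / 2 ^ N := by
  have hcount : Nat.card {b : Fin N → ZMod 2 // ∀ i ∈ A, ∀ j ∉ A, ¬(b i = 1 ∧ b j = 1)} + 1 =
      2 ^ NA + 2 ^ (N - NA) := by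
    rw [Nat.card_congr (Equiv.subtypeEquivRight (forall_not_both_one_across_iff A)),
      natCard_vanishing_off_or_on_add_one, card_compl, ZMod.card, Fintype.card_fin, hA]
  have hcountℚ : (Nat.card {b : Fin N → ZMod 2 // ∀ i ∈ A, ∀ j ∉ A, ¬(b i = 1 ∧ b j = 1)} : ℚ) =
      2 ^ NA + 2 ^ (N - NA) - 1 := by
    rw [eq_sub_iff_add_eq]; exact_mod_cast hcount
  push_cast
  rw [hcountℚ]
  field_simp
end

section
/- Let A and B be disjoint sets with |A| = N_A, |B| = N_B. Consider pairs of functions (f: A → F_2^2, g: B → F_2^2) such that if some i ∈ A has f(i) ∈ {01, 10} (odd weight), then the restriction of g to every pair {j,k} with j ≠ k ∈ B lies in the support pattern of the matrix M_s with entries M[00,00]=M[00,01]=M[00,10]=M[00,11]=1, M[01,00]=1, M[01,01]=0, M[01,10]=1, M[01,11]=0, M[10,00]=1, M[10,01]=1, M[10,10]=0, M[10,11]=0, M[11,00]=1, M[11,01]=0, M[11,10]=0, M[11,11]=1; that is, either g takes values only in {00,11}, or exactly one j has g(j) ∈ {01,10} and all others are 00, or exactly one j has g(j)=01 and exactly one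 k has g(k)=10 and all others are 00. Then the number of such pairs is 4^{N_B}·2^{N_A} + (2^{N_A}-1)·2^{N_A}·[2^{N_B} + N_B(N_B+1)]. -/
/-- `g : B → F₂²` satisfies the surviving pattern: either all values in `{00,11}`,
or exactly one position carries `01` or `10` and all others carry `00`,
or exactly one position carries `01`, one carries `10`, and all others `00`. -/
def SurvPattern {B : Type} (g : B → ZMod 2 × ZMod 2) : Prop :=
  (∀ j, g j = (0, 0) ∨ g j = (1, 1)) ∨
  (∃ j, (g j = (0, 1) ∨ g j = (1, 0)) ∧ ∀ k, k ≠ j → g k = (0, 0)) ∨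
  (∃ j k, j ≠ k ∧ g j = (0, 1) ∧ g k = (1, 0) ∧
    ∀ l, l ≠ j → l ≠ k → g l = (0, 0))

private lemma disjoint_pred {α : Type*} {p q : α → Prop}
    (h : ∀ x, p x → q x → False) : Disjoint p q := by
  intro r hrp hrq x hx
  exact (h x (hrp x hx) (hrq x hx)).elim

private lemma card_evens {A : Type} [Fintype A] :
    Nat.card {f : A → ZMod 2 × ZMod 2 // ∀ i, f i = (0,0) ∨ f i = (1,1)}
      = 2 ^ Fintype.card A := by
  rw [Nat.card_congr (Equiv.subtypePiEquivPi (p := fun _ x => x = (0,0) ∨ x = (1,1))),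
    Nat.card_pi]
  have h : Fintype.card {b : ZMod 2 × ZMod 2 // b = (0,0) ∨ b = (1,1)} = 2 := by decide
  simp [Nat.card_eq_fintype_card, h]

private lemma card_single {B : Type} [Fintype B] :
    Nat.card {g : B → ZMod 2 × ZMod 2 //
      ∃ j, (g j = (0, 1) ∨ g j = (1, 0)) ∧ ∀ k, k ≠ j → g k = (0, 0)}
      = 2 * Fintype.card B := by
  classical
  have key : Nat.card ({v : ZMod 2 × ZMod 2 // v = (0,1) ∨ v = (1,0)} × B)
      = Nat.card {g : B → ZMod 2 × ZMod 2 //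
        ∃ j, (g j = (0, 1) ∨ g j = (1, 0)) ∧ ∀ k, k ≠ j → g k = (0, 0)} := by
    apply Nat.card_eq_of_bijective
      (fun x => ⟨fun k => if k = x.2 then x.1.1 else (0,0),
        ⟨x.2, by simpa using x.1.2, fun k hk => if_neg hk⟩⟩)
    constructor
    · rintro ⟨⟨v, hv⟩, j⟩ ⟨⟨w, hw⟩, j'⟩ h
      have h' := congrArg Subtype.val h
      by_cases hjj : j = j'
      · subst hjj
        have := congrFun h' j
        simp at this
        simp [this]
      · have := congrFun h' j
        simp [hjj] at this
        rcases hv with hv | hv <;> rw [hv] at this <;> exact absurd this (by decide)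
    · rintro ⟨g, j, hj, hz⟩
      refine ⟨⟨⟨g j, hj⟩, j⟩, ?_⟩
      apply Subtype.ext
      funext k
      by_cases hk : k = j
      · simp [hk]
      · simp [hk, hz k hk]
  rw [← key, Nat.card_prod, Nat.card_eq_fintype_card, Nat.card_eq_fintype_card]
  have h2 : Fintype.card {v : ZMod 2 × ZMod 2 // v = (0,1) ∨ v = (1,0)} = 2 := by decide
  rw [h2]

private lemma card_offdiag {B : Type} [Fintype B] :
    Nat.card {jk : B × B // jk.1 ≠ jk.2}
      = Fintype.card B * Fintype.card B - Fintype.card B := by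
  classical
  have hdiag : Fintype.card {jk : B × B // jk.1 = jk.2} = Fintype.card B := by
    rw [← Nat.card_eq_fintype_card, ← Nat.card_eq_fintype_card (α := B)]
    exact (Nat.card_eq_of_bijective (fun b => (⟨(b, b), rfl⟩ : {jk : B × B // jk.1 = jk.2}))
      ⟨fun a b h => by simpa using congrArg (fun x => x.1.1) h,
        fun x => ⟨x.1.1, by obtain ⟨⟨a, b⟩, h⟩ := x; cases h; rfl⟩⟩).symm
  rw [Nat.card_eq_fintype_card]
  have := Fintype.card_subtype_compl (fun jk : B × B => jk.1 = jk.2)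
  simp only [ne_eq]
  rw [this, hdiag, Fintype.card_prod]

private def dblFun {B : Type} [DecidableEq B] (j k : B) : B → ZMod 2 × ZMod 2 :=
  fun l => if l = j then (0,1) else if l = k then (1,0) else (0,0)

private lemma dblFun_apply {B : Type} [DecidableEq B] (j k l : B) :
    dblFun j k l = if l = j then (0,1) else if l = k then (1,0) else (0,0) := rfl

private lemma card_double {B : Type} [Fintype B] :
    Nat.card {g : B → ZMod 2 × ZMod 2 //
      ∃ j k, j ≠ k ∧ g j = (0, 1) ∧ g k = (1, 0) ∧
        ∀ l, l ≠ j → l ≠ k → g l = (0, 0)}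
      = Fintype.card B * Fintype.card B - Fintype.card B := by
  classical
  rw [← card_offdiag]
  refine (Nat.card_eq_of_bijective
    (fun x => (⟨dblFun x.1.1 x.1.2,
      ⟨x.1.1, x.1.2, x.2,
        by rw [dblFun_apply, if_pos rfl],
        by rw [dblFun_apply, if_neg (Ne.symm x.2), if_pos rfl],
        fun l hl1 hl2 => by rw [dblFun_apply, if_neg hl1, if_neg hl2]⟩⟩ :
      {g : B → ZMod 2 × ZMod 2 // ∃ j k, j ≠ k ∧ g j = (0, 1) ∧ g k = (1, 0) ∧
        ∀ l, l ≠ j → l ≠ k → g l = (0, 0)})) ?_).symm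
  constructor
  · rintro ⟨⟨j, k⟩, hjk⟩ ⟨⟨j', k'⟩, hjk'⟩ h
    have h' : dblFun j k = dblFun j' k' := congrArg Subtype.val h
    simp only [ne_eq] at hjk hjk'
    have hj : j = j' := by
      by_contra hne
      have e1 := congrFun h' j
      rw [dblFun_apply, dblFun_apply, if_pos rfl, if_neg hne] at e1
      by_cases h2 : j = k'
      · rw [if_pos h2] at e1; exact absurd e1 (by decide)
      · rw [if_neg h2] at e1; exact absurd e1 (by decide)
    subst hj
    have hk : k = k' := by
      by_contra hne
      have e1 := congrFun h' k
      rw [dblFun_apply, dblFun_apply, if_neg (Ne.symm hjk), if_pos rfl,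
        if_neg (Ne.symm hjk), if_neg hne] at e1
      exact absurd e1 (by decide)
    simp [Subtype.ext_iff, hk]
  · rintro ⟨g, j, k, hjk, hgj, hgk, hz⟩
    refine ⟨⟨(j, k), hjk⟩, ?_⟩
    apply Subtype.ext
    funext l
    show dblFun j k l = g l
    by_cases hl1 : l = j
    · subst hl1; rw [dblFun_apply, if_pos rfl]; exact hgj.symm
    · by_cases hl2 : l = k
      · subst hl2; rw [dblFun_apply, if_neg (Ne.symm hjk), if_pos rfl]; exact hgk.symm
      · rw [dblFun_apply, if_neg hl1, if_neg hl2]; exact (hz l hl1 hl2).symm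

private lemma card_surv {B : Type} [Fintype B] :
    Nat.card {g : B → ZMod 2 × ZMod 2 // SurvPattern g}
      = 2 ^ Fintype.card B + Fintype.card B * (Fintype.card B + 1) := by
  classical
  set NB := Fintype.card B with hNB
  set P1 : (B → ZMod 2 × ZMod 2) → Prop :=
    fun g => ∀ j, g j = (0, 0) ∨ g j = (1, 1) with hP1
  set P2 : (B → ZMod 2 × ZMod 2) → Prop :=
    fun g => ∃ j, (g j = (0, 1) ∨ g j = (1, 0)) ∧ ∀ k, k ≠ j → g k = (0, 0) with hP2
  set P3 : (B → ZMod 2 × ZMod 2) → Prop :=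
    fun g => ∃ j k, j ≠ k ∧ g j = (0, 1) ∧ g k = (1, 0) ∧
      ∀ l, l ≠ j → l ≠ k → g l = (0, 0) with hP3
  have hd12 : Disjoint P1 (fun g => P2 g ∨ P3 g) := by
    apply disjoint_pred
    rintro g h1 (⟨j, hj, _⟩ | ⟨j, k, _, hj, _, _⟩)
    · rcases h1 j with h | h <;> rcases hj with hj | hj <;> rw [h] at hj <;>
        exact absurd hj (by decide)
    · rcases h1 j with h | h <;> rw [h] at hj <;> exact absurd hj (by decide)
  have hd23 : Disjoint P2 P3 := by
    apply disjoint_pred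
    rintro g ⟨j, _, hz⟩ ⟨j', k', hne, hj', hk', _⟩
    by_cases h1 : j' = j
    · have := hz k' (fun hh => hne (h1.trans hh.symm))
      rw [this] at hk'; exact absurd hk' (by decide)
    · have := hz j' h1
      rw [this] at hj'; exact absurd hj' (by decide)
  have hsurv : ∀ g : B → ZMod 2 × ZMod 2,
      SurvPattern g ↔ (P1 g ∨ (P2 g ∨ P3 g)) := fun g => Iff.rfl
  rw [Nat.card_congr ((Equiv.subtypeEquivRight hsurv).trans
    ((subtypeOrEquiv P1 _ hd12).trans
      (Equiv.sumCongr (Equiv.refl _) (subtypeOrEquiv P2 P3 hd23)))),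
    Nat.card_sum, Nat.card_sum]
  have h1 : Nat.card {g // P1 g} = 2 ^ NB := card_evens
  have h2 : Nat.card {g // P2 g} = 2 * NB := card_single
  have h3 : Nat.card {g // P3 g} = NB * NB - NB := card_double
  rw [h1, h2, h3]
  have hle : NB ≤ NB * NB := by nlinarith
  zify [hle]
  ring

/-- Half-CCZ-ensemble bit-string counting: the number of pairs `(f : A → F₂²,
g : B → F₂²)` such that either all `f i ∈ {00,11}` (and then `g` is arbitrary) or
`g` satisfies the surviving pattern, equals
`4^{N_B}·2^{N_A} + (2^{N_A}-1)·2^{N_A}·[2^{N_B} + N_B(N_B+1)]`. -/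
theorem stmt_6 (A B : Type) [Fintype A] [Fintype B] (NA NB : ℕ)
    (hA : Fintype.card A = NA) (hB : Fintype.card B = NB) :
    Nat.card {p : (A → ZMod 2 × ZMod 2) × (B → ZMod 2 × ZMod 2) //
      (∀ i, p.1 i = (0, 0) ∨ p.1 i = (1, 1)) ∨ SurvPattern p.2}
      = 4 ^ NB * 2 ^ NA + (2 ^ NA - 1) * 2 ^ NA * (2 ^ NB + NB * (NB + 1)) := by
  classical
  subst hA hB
  set P : (A → ZMod 2 × ZMod 2) → Prop :=
    fun f => ∀ i, f i = (0, 0) ∨ f i = (1, 1) with hP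
  have key : ∀ p : (A → ZMod 2 × ZMod 2) × (B → ZMod 2 × ZMod 2),
      (P p.1 ∨ SurvPattern p.2) ↔
      ((P p.1 ∧ True) ∨ ((¬ P p.1) ∧ SurvPattern p.2)) := by
    intro p; by_cases h : P p.1 <;> tauto
  have hd : Disjoint (fun p : (A → ZMod 2 × ZMod 2) × (B → ZMod 2 × ZMod 2) => P p.1 ∧ True)
      (fun p => (¬ P p.1) ∧ SurvPattern p.2) := by
    apply disjoint_pred
    rintro p ⟨h1, -⟩ ⟨h2, -⟩
    exact h2 h1
  rw [Nat.card_congr ((Equiv.subtypeEquivRight key).trans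
    ((subtypeOrEquiv _ _ hd).trans
      (Equiv.sumCongr (Equiv.subtypeProdEquivProd (p := P) (q := fun _ => True))
        (Equiv.subtypeProdEquivProd (p := fun f => ¬ P f) (q := SurvPattern))))),
    Nat.card_sum, Nat.card_prod, Nat.card_prod]
  have c1 : Nat.card {f // P f} = 2 ^ Fintype.card A := card_evens
  have c2 : Nat.card {g : B → ZMod 2 × ZMod 2 // True} = 4 ^ Fintype.card B := by
    rw [Nat.card_congr (Equiv.subtypeUnivEquiv (fun _ => trivial)), Nat.card_fun]
    have h4 : Nat.card (ZMod 2 × ZMod 2) = 4 := by rw [Nat.card_eq_fintype_card]; decide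
    rw [h4, Nat.card_eq_fintype_card]
  have c3 : Nat.card {f // ¬ P f} = 4 ^ Fintype.card A - 2 ^ Fintype.card A := by
    rw [Nat.card_eq_fintype_card, Fintype.card_subtype_compl,
      ← Nat.card_eq_fintype_card (α := {f // P f}), c1,
      ← Nat.card_eq_fintype_card, Nat.card_fun]
    have h4 : Nat.card (ZMod 2 × ZMod 2) = 4 := by rw [Nat.card_eq_fintype_card]; decide
    rw [h4, Nat.card_eq_fintype_card]
  have c4 := card_surv (B := B)
  rw [c1, c2, c3, c4]
  set a := Fintype.card A
  set b := Fintype.card B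
  have h4 : (4 : ℕ) ^ a = 2 ^ a * 2 ^ a := by rw [← Nat.mul_pow]
  have h5 : (2:ℕ)^a * 2^a - 2^a = (2^a - 1) * 2^a := by
    rw [Nat.sub_mul, one_mul]
  rw [h4, h5]
  ring
end

section
/- Let A, B be disjoint sets with |A| = N_A, |B| = N_B. The number of pairs of functions (f: A → F_2², g: B → F_2²) such that for every i ∈ A, j ∈ B: (-1)^{f(i)_1 g(j)_1} · (-1)^{f(i)_2 g(j)_2} = 1 (where f(i) = (f(i)_1, f(i)_2) ∈ F_2²) equals 4^{N_A} + 4^{N_B} - 1 + 3(2^{N_A} - 1)(2^{N_B} - 1). -/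
section aux

private lemma czaux_card_ne (A : Type) [Fintype A] (α : Type) [Fintype α] [DecidableEq α]
    (c : α) :
    Nat.card {h : A → α // ∃ i, h i ≠ c} = Fintype.card α ^ Fintype.card A - 1 := by
  classical
  have hiff : ∀ h : A → α, (∃ i, h i ≠ c) ↔ ¬ (h = fun _ => c) := by
    intro h
    simp [funext_iff]
  rw [Nat.card_congr (Equiv.subtypeEquivRight hiff), Nat.card_eq_fintype_card,
    Fintype.card_subtype_compl, Fintype.card_subtype_eq (fun _ => c), Fintype.card_fun]

private lemma czaux_line1 (A : Type) [Fintype A] :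
    Nat.card {f : A → ZMod 2 × ZMod 2 // (∀ i, (f i).1 = 0) ∧ (∃ i, f i ≠ 0)}
      = 2 ^ Fintype.card A - 1 := by
  have e : {f : A → ZMod 2 × ZMod 2 // (∀ i, (f i).1 = 0) ∧ (∃ i, f i ≠ 0)} ≃
      {h : A → ZMod 2 // ∃ i, h i ≠ 0} := by
    refine ⟨fun f => ⟨fun i => (f.1 i).2, ?_⟩, fun h => ⟨fun i => (0, h.1 i), ?_, ?_⟩, ?_, ?_⟩
    · obtain ⟨i, hi⟩ := f.2.2
      exact ⟨i, fun h2 => hi (Prod.ext (f.2.1 i) h2)⟩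
    · intro i; rfl
    · obtain ⟨i, hi⟩ := h.2
      exact ⟨i, fun h2 => hi (congrArg Prod.snd h2)⟩
    · rintro ⟨f, hf1, hf2⟩
      apply Subtype.ext; funext i
      exact Prod.ext (hf1 i).symm rfl
    · rintro ⟨h, hh⟩; rfl
  rw [Nat.card_congr e, czaux_card_ne A (ZMod 2) 0, ZMod.card]

private lemma czaux_line2 (A : Type) [Fintype A] :
    Nat.card {f : A → ZMod 2 × ZMod 2 // (∀ i, (f i).2 = 0) ∧ (∃ i, f i ≠ 0)}
      = 2 ^ Fintype.card A - 1 := by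
  have e : {f : A → ZMod 2 × ZMod 2 // (∀ i, (f i).2 = 0) ∧ (∃ i, f i ≠ 0)} ≃
      {h : A → ZMod 2 // ∃ i, h i ≠ 0} := by
    refine ⟨fun f => ⟨fun i => (f.1 i).1, ?_⟩, fun h => ⟨fun i => (h.1 i, 0), ?_, ?_⟩, ?_, ?_⟩
    · obtain ⟨i, hi⟩ := f.2.2
      exact ⟨i, fun h2 => hi (Prod.ext h2 (f.2.1 i))⟩
    · intro i; rfl
    · obtain ⟨i, hi⟩ := h.2
      exact ⟨i, fun h2 => hi (congrArg Prod.fst h2)⟩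
    · rintro ⟨f, hf1, hf2⟩
      apply Subtype.ext; funext i
      exact Prod.ext rfl (hf1 i).symm
    · rintro ⟨h, hh⟩; rfl
  rw [Nat.card_congr e, czaux_card_ne A (ZMod 2) 0, ZMod.card]

private lemma czaux_line3 (A : Type) [Fintype A] :
    Nat.card {f : A → ZMod 2 × ZMod 2 // (∀ i, (f i).1 = (f i).2) ∧ (∃ i, f i ≠ 0)}
      = 2 ^ Fintype.card A - 1 := by
  have e : {f : A → ZMod 2 × ZMod 2 // (∀ i, (f i).1 = (f i).2) ∧ (∃ i, f i ≠ 0)} ≃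
      {h : A → ZMod 2 // ∃ i, h i ≠ 0} := by
    refine ⟨fun f => ⟨fun i => (f.1 i).1, ?_⟩, fun h => ⟨fun i => (h.1 i, h.1 i), ?_, ?_⟩, ?_, ?_⟩
    · obtain ⟨i, hi⟩ := f.2.2
      refine ⟨i, fun h2 => hi (Prod.ext h2 ?_)⟩
      rw [← f.2.1 i]; exact h2
    · intro i; rfl
    · obtain ⟨i, hi⟩ := h.2
      exact ⟨i, fun h2 => hi (congrArg Prod.fst h2)⟩
    · rintro ⟨f, hf1, hf2⟩
      apply Subtype.ext; funext i
      exact Prod.ext rfl (hf1 i)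
    · rintro ⟨h, hh⟩; rfl
  rw [Nat.card_congr e, czaux_card_ne A (ZMod 2) 0, ZMod.card]

end aux

/-- CZ-variance counting: the number of pairs `(f : A → F₂², g : B → F₂²)` with
`f(i)·g(j) = 0` over `F₂` for all cross pairs equals
`4^{N_A} + 4^{N_B} - 1 + 3(2^{N_A}-1)(2^{N_B}-1)`. -/
theorem stmt_10 (A B : Type) [Fintype A] [Fintype B] (NA NB : ℕ)
    (hA : Fintype.card A = NA) (hB : Fintype.card B = NB) :
    Nat.card {p : (A → ZMod 2 × ZMod 2) × (B → ZMod 2 × ZMod 2) //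
      ∀ (i : A) (j : B), (p.1 i).1 * (p.2 j).1 + (p.1 i).2 * (p.2 j).2 = 0}
      = 4 ^ NA + 4 ^ NB - 1 + 3 * (2 ^ NA - 1) * (2 ^ NB - 1) := by
  classical
  subst hA hB
  set V := ZMod 2 × ZMod 2 with hV
  set P := (A → V) × (B → V) with hP
  set S : Set P := {p | ∀ (i : A) (j : B), (p.1 i).1 * (p.2 j).1 + (p.1 i).2 * (p.2 j).2 = 0}
    with hS
  set S0 : Set P := {p | ∀ i, p.1 i = 0} with hS0
  set S1 : Set P := {p | (∃ i, p.1 i ≠ 0) ∧ (∀ j, p.2 j = 0)} with hS1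
  set T1 : Set P := {p | ((∀ i, (p.1 i).1 = 0) ∧ (∃ i, p.1 i ≠ 0)) ∧
      ((∀ j, (p.2 j).2 = 0) ∧ (∃ j, p.2 j ≠ 0))} with hT1
  set T2 : Set P := {p | ((∀ i, (p.1 i).2 = 0) ∧ (∃ i, p.1 i ≠ 0)) ∧
      ((∀ j, (p.2 j).1 = 0) ∧ (∃ j, p.2 j ≠ 0))} with hT2
  set T3 : Set P := {p | ((∀ i, (p.1 i).1 = (p.1 i).2) ∧ (∃ i, p.1 i ≠ 0)) ∧
      ((∀ j, (p.2 j).1 = (p.2 j).2) ∧ (∃ j, p.2 j ≠ 0))} with hT3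
  have hzmod : ∀ x : ZMod 2, x = 0 ∨ x = 1 := by decide
  have hsplit : S = S0 ∪ S1 ∪ T1 ∪ T2 ∪ T3 := by
    ext p
    constructor
    · intro hp
      by_cases hf : ∀ i, p.1 i = 0
      · exact Or.inl (Or.inl (Or.inl (Or.inl hf)))
      · push_neg at hf
        by_cases hg : ∀ j, p.2 j = 0
        · exact Or.inl (Or.inl (Or.inl (Or.inr ⟨hf, hg⟩)))
        · push_neg at hg
          obtain ⟨i0, hi0⟩ := hf
          obtain ⟨j0, hj0⟩ := hg
          -- analyze the value of p.1 i0
          rcases hzmod (p.1 i0).1 with h1 | h1 <;> rcases hzmod (p.1 i0).2 with h2 | h2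
          · exact absurd (Prod.ext h1 h2) hi0
          · -- f i0 = (0,1) : case T1
            have hgj : ∀ j, (p.2 j).2 = 0 := by
              intro j
              have := hp i0 j
              rw [h1, h2] at this
              simpa using this
            have hgj0 : (p.2 j0).1 = 1 := by
              rcases hzmod (p.2 j0).1 with h | h
              · exact absurd (Prod.ext h (hgj j0)) hj0
              · exact h
            have hfi : ∀ i, (p.1 i).1 = 0 := by
              intro i
              have := hp i j0
              rw [hgj0, hgj j0] at this
              simpa using this
            exact Or.inl (Or.inl (Or.inr ⟨⟨hfi, i0, hi0⟩, hgj, j0, hj0⟩))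
          · -- f i0 = (1,0) : case T2
            have hgj : ∀ j, (p.2 j).1 = 0 := by
              intro j
              have := hp i0 j
              rw [h1, h2] at this
              simpa using this
            have hgj0 : (p.2 j0).2 = 1 := by
              rcases hzmod (p.2 j0).2 with h | h
              · exact absurd (Prod.ext (hgj j0) h) hj0
              · exact h
            have hfi : ∀ i, (p.1 i).2 = 0 := by
              intro i
              have := hp i j0
              rw [hgj0, hgj j0] at this
              simpa using this
            exact Or.inl (Or.inr ⟨⟨hfi, i0, hi0⟩, hgj, j0, hj0⟩)
          · -- f i0 = (1,1) : case T3
            have hgj : ∀ j, (p.2 j).1 = (p.2 j).2 := by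
              intro j
              have := hp i0 j
              rw [h1, h2] at this
              simp only [one_mul] at this
              rcases hzmod (p.2 j).1 with h | h <;> rcases hzmod (p.2 j).2 with h' | h' <;>
                rw [h, h'] at this ⊢ <;> revert this <;> decide
            have hgj0 : (p.2 j0).1 = 1 ∧ (p.2 j0).2 = 1 := by
              rcases hzmod (p.2 j0).1 with h | h
              · exact absurd (Prod.ext h (h ▸ hgj j0).symm) hj0
              · exact ⟨h, (h ▸ hgj j0).symm⟩
            have hfi : ∀ i, (p.1 i).1 = (p.1 i).2 := by
              intro i
              have := hp i j0
              rw [hgj0.1, hgj0.2] at this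
              simp only [mul_one] at this
              rcases hzmod (p.1 i).1 with h | h <;> rcases hzmod (p.1 i).2 with h' | h' <;>
                rw [h, h'] at this ⊢ <;> revert this <;> decide
            exact Or.inr ⟨⟨hfi, i0, hi0⟩, hgj, j0, hj0⟩
    · rintro ((((hp | hp) | hp) | hp) | hp) <;> intro i j
      · rw [hp i]; simp
      · rw [hp.2 j]; simp
      · rw [hp.1.1 i, hp.2.1 j]; ring
      · rw [hp.1.1 i, hp.2.1 j]; ring
      · rw [hp.1.1 i, hp.2.1 j, ← two_mul]
        rw [show (2 : ZMod 2) = 0 from rfl, zero_mul]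
  -- disjointness
  have d01 : Disjoint S0 S1 := by
    rw [Set.disjoint_left]
    rintro p hp ⟨⟨i, hi⟩, -⟩
    exact hi (hp i)
  have d0T1 : Disjoint S0 T1 := by
    rw [Set.disjoint_left]
    rintro p hp ⟨⟨-, i, hi⟩, -⟩
    exact hi (hp i)
  have d0T2 : Disjoint S0 T2 := by
    rw [Set.disjoint_left]
    rintro p hp ⟨⟨-, i, hi⟩, -⟩
    exact hi (hp i)
  have d0T3 : Disjoint S0 T3 := by
    rw [Set.disjoint_left]
    rintro p hp ⟨⟨-, i, hi⟩, -⟩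
    exact hi (hp i)
  have d1T1 : Disjoint S1 T1 := by
    rw [Set.disjoint_left]
    rintro p ⟨-, hg⟩ ⟨-, -, j, hj⟩
    exact hj (hg j)
  have d1T2 : Disjoint S1 T2 := by
    rw [Set.disjoint_left]
    rintro p ⟨-, hg⟩ ⟨-, -, j, hj⟩
    exact hj (hg j)
  have d1T3 : Disjoint S1 T3 := by
    rw [Set.disjoint_left]
    rintro p ⟨-, hg⟩ ⟨-, -, j, hj⟩
    exact hj (hg j)
  have dT12 : Disjoint T1 T2 := by
    rw [Set.disjoint_left]
    rintro p ⟨⟨h1, i, hi⟩, -⟩ ⟨⟨h2, -⟩, -⟩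
    exact hi (Prod.ext (h1 i) (h2 i))
  have dT13 : Disjoint T1 T3 := by
    rw [Set.disjoint_left]
    rintro p ⟨⟨h1, i, hi⟩, -⟩ ⟨⟨h3, -⟩, -⟩
    exact hi (Prod.ext (h1 i) (by rw [← h3 i]; exact h1 i))
  have dT23 : Disjoint T2 T3 := by
    rw [Set.disjoint_left]
    rintro p ⟨⟨h2, i, hi⟩, -⟩ ⟨⟨h3, -⟩, -⟩
    exact hi (Prod.ext (by rw [h3 i]; exact h2 i) (h2 i))
  -- cardinalities of the pieces
  have c0 : S0.ncard = 4 ^ Fintype.card B := by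
    have e : S0 ≃ (B → V) := by
      refine ⟨fun p => p.1.2, fun g => ⟨⟨fun _ => 0, g⟩, fun i => rfl⟩, ?_, fun g => rfl⟩
      rintro ⟨⟨f, g⟩, hp⟩
      apply Subtype.ext
      refine Prod.ext ?_ rfl
      funext i
      exact (hp i).symm
    rw [Set.ncard_eq_toFinset_card', Set.toFinset_card, ← Nat.card_eq_fintype_card,
      Nat.card_congr e, Nat.card_eq_fintype_card, Fintype.card_fun]
    norm_num [hV]
  have c1 : S1.ncard = 4 ^ Fintype.card A - 1 := by
    have e : S1 ≃ {f : A → V // ∃ i, f i ≠ 0} := by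
      refine ⟨fun p => ⟨p.1.1, p.2.1⟩, fun f => ⟨⟨f.1, fun _ => 0⟩, f.2, fun j => rfl⟩,
        ?_, fun f => rfl⟩
      rintro ⟨⟨f, g⟩, hf, hg⟩
      apply Subtype.ext
      refine Prod.ext rfl ?_
      funext j
      exact (hg j).symm
    rw [Set.ncard_eq_toFinset_card', Set.toFinset_card, ← Nat.card_eq_fintype_card,
      Nat.card_congr e, czaux_card_ne A V 0]
    norm_num [hV]
  have eT : ∀ (Qa : V → Prop) (Qb : V → Prop),
      ({p : P | ((∀ i, Qa (p.1 i)) ∧ (∃ i, p.1 i ≠ 0)) ∧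
        ((∀ j, Qb (p.2 j)) ∧ (∃ j, p.2 j ≠ 0))} : Set P) ≃
      {f : A → V // (∀ i, Qa (f i)) ∧ (∃ i, f i ≠ 0)} ×
      {g : B → V // (∀ j, Qb (g j)) ∧ (∃ j, g j ≠ 0)} := by
    intro Qa Qb
    exact ⟨fun p => ⟨⟨p.1.1, p.2.1⟩, ⟨p.1.2, p.2.2⟩⟩,
      fun q => ⟨⟨q.1.1, q.2.1⟩, q.1.2, q.2.2⟩,
      fun p => rfl, fun q => rfl⟩
  have cT1 : T1.ncard = (2 ^ Fintype.card A - 1) * (2 ^ Fintype.card B - 1) := by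
    rw [Set.ncard_eq_toFinset_card', Set.toFinset_card, ← Nat.card_eq_fintype_card,
      Nat.card_congr (eT (fun v => v.1 = 0) (fun v => v.2 = 0)), Nat.card_prod,
      czaux_line1 A, czaux_line2 B]
  have cT2 : T2.ncard = (2 ^ Fintype.card A - 1) * (2 ^ Fintype.card B - 1) := by
    rw [Set.ncard_eq_toFinset_card', Set.toFinset_card, ← Nat.card_eq_fintype_card,
      Nat.card_congr (eT (fun v => v.2 = 0) (fun v => v.1 = 0)), Nat.card_prod,
      czaux_line2 A, czaux_line1 B]
  have cT3 : T3.ncard = (2 ^ Fintype.card A - 1) * (2 ^ Fintype.card B - 1) := by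
    rw [Set.ncard_eq_toFinset_card', Set.toFinset_card, ← Nat.card_eq_fintype_card,
      Nat.card_congr (eT (fun v => v.1 = v.2) (fun v => v.1 = v.2)), Nat.card_prod,
      czaux_line3 A, czaux_line3 B]
  -- assemble
  have hmain : Nat.card S = S.ncard := (Nat.card_coe_set_eq S)
  calc Nat.card {p : (A → ZMod 2 × ZMod 2) × (B → ZMod 2 × ZMod 2) //
      ∀ (i : A) (j : B), (p.1 i).1 * (p.2 j).1 + (p.1 i).2 * (p.2 j).2 = 0}
      = S.ncard := hmain
    _ = (S0 ∪ S1 ∪ T1 ∪ T2 ∪ T3).ncard := by rw [hsplit]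
    _ = S0.ncard + S1.ncard + T1.ncard + T2.ncard + T3.ncard := by
        rw [Set.ncard_union_eq (by
            simp only [Set.disjoint_union_left]
            exact ⟨⟨⟨d0T3, d1T3⟩, dT13⟩, dT23⟩) (Set.toFinite _) (Set.toFinite _),
          Set.ncard_union_eq (by
            simp only [Set.disjoint_union_left]
            exact ⟨⟨d0T2, d1T2⟩, dT12⟩) (Set.toFinite _) (Set.toFinite _),
          Set.ncard_union_eq (by
            simp only [Set.disjoint_union_left]
            exact ⟨d0T1, d1T1⟩) (Set.toFinite _) (Set.toFinite _),
          Set.ncard_union_eq d01 (Set.toFinite _) (Set.toFinite _)]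
    _ = 4 ^ Fintype.card A + 4 ^ Fintype.card B - 1 +
        3 * (2 ^ Fintype.card A - 1) * (2 ^ Fintype.card B - 1) := by
        rw [c0, c1, cT1, cT2, cT3]
        have h1 : 1 ≤ 2 ^ Fintype.card A := Nat.one_le_two_pow
        have h2 : 1 ≤ 2 ^ Fintype.card B := Nat.one_le_two_pow
        have h3 : 1 ≤ 4 ^ Fintype.card A := Nat.one_le_pow _ _ (by norm_num)
        have h4 : 1 ≤ 4 ^ Fintype.card B := Nat.one_le_pow _ _ (by norm_num)
        have h5 : 1 ≤ 4 ^ Fintype.card A + 4 ^ Fintype.card B := le_trans h3 (Nat.le_add_right _ _)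
        zify [h1, h2, h3, h4, h5]
        ring
end
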